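/- Harmonic functions with equal squares differ by a global sign: Let W ⊆ ℂ be a nonempty connected open set and let u, v : ℂ → ℝ be harmonic on W with u(z)² = v(z)² for all z ∈ W. Then v = u on all of W or v = −u on all of W. -/

import Mathlib

/-!
Harmonic functions on `ℂ` are real-analytic, hence so is `u + v`. Since `(u - v)(u + v) = u² - v²`
vanishes on `W`, if `u - v` is not identically zero on `W` then `u + v` vanishes on the nonempty
open set where `u ≠ v`, and the identity theorem spreads this over the connected set `W`.
-/

/-- `u : ℂ → ℝ` is harmonic on the open set `W ⊆ ℂ ≅ ℝ²`: it is twice continuously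
differentiable on `W` and `∂²u/∂x² + ∂²u/∂y² = 0` on `W`. -/
def IsHarmonicOn (u : ℂ → ℝ) (W : Set ℂ) : Prop :=
  ContDiffOn ℝ 2 u W ∧
    ∀ z ∈ W, fderiv ℝ (fun w => fderiv ℝ u w 1) z 1
      + fderiv ℝ (fun w => fderiv ℝ u w Complex.I) z Complex.I = 0

open Topology InnerProductSpace

theorem iteratedFDeriv_two_apply_eq_fderiv_fderiv_apply {𝕜 E F : Type*} [NontriviallyNormedField 𝕜]
    [NormedAddCommGroup E] [NormedSpace 𝕜 E] [NormedAddCommGroup F] [NormedSpace 𝕜 F]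
    {f : E → F} {x : E} (hf : DifferentiableAt 𝕜 (fderiv 𝕜 f) x) (v w : E) :
    iteratedFDeriv 𝕜 2 f x ![v, w] = fderiv 𝕜 (fun y => fderiv 𝕜 f y w) x v := by
  rw [iteratedFDeriv_two_apply, fderiv_clm_apply hf (differentiableAt_const w)]
  simp

theorem IsHarmonicOn.harmonicOnNhd {u : ℂ → ℝ} {W : Set ℂ} (hW : IsOpen W)
    (hu : IsHarmonicOn u W) : HarmonicOnNhd u W := by
  intro x hx
  refine ⟨hu.1.contDiffAt (hW.mem_nhds hx), ?_⟩
  filter_upwards [hW.mem_nhds hx] with y hy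
  have hdiff : DifferentiableAt ℝ (fderiv ℝ u) y :=
    ((hu.1.contDiffAt (hW.mem_nhds hy)).fderiv_right (m := 1) le_rfl).differentiableAt
      one_ne_zero
  simpa [laplacian_eq_iteratedFDeriv_complexPlane,
    iteratedFDeriv_two_apply_eq_fderiv_fderiv_apply hdiff] using hu.2 y hy

theorem AnalyticOnNhd.eq_zero_or_eq_zero_of_smul_eq_zero_of_isOpen {𝕜 E F : Type*}
    [NontriviallyNormedField 𝕜] [NormedAddCommGroup E] [NormedSpace 𝕜 E]
    [NormedAddCommGroup F] [NormedSpace 𝕜 F] {f : E → 𝕜} {g : E → F} {U : Set E}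
    (hf : ContinuousOn f U) (hg : AnalyticOnNhd 𝕜 g U) (hUo : IsOpen U) (hU : IsPreconnected U)
    (hfg : ∀ z ∈ U, f z • g z = 0) :
    (∀ z ∈ U, f z = 0) ∨ (∀ z ∈ U, g z = 0) := by
  by_cases hf0 : ∀ z ∈ U, f z = 0
  · exact Or.inl hf0
  push Not at hf0
  obtain ⟨z, hz, hfz⟩ := hf0
  have hgz : g =ᶠ[𝓝 z] 0 := by
    filter_upwards [(hf.continuousAt (hUo.mem_nhds hz)).eventually_ne hfz, hUo.mem_nhds hz]
      with w hfw hw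
    exact (smul_eq_zero.mp (hfg w hw)).resolve_left hfw
  exact Or.inr (hg.eqOn_zero_of_preconnected_of_eventuallyEq_zero hU hz hgz)

/-- Harmonic functions with equal squares differ by a global sign: if `u, v` are
harmonic on a nonempty connected open set `W` and `u² = v²` on `W`, then `v = u`
on all of `W` or `v = −u` on all of `W`. -/
theorem harmonic_sq_eq_implies_global_sign
    (W : Set ℂ) (hWopen : IsOpen W) (hWconn : IsConnected W)
    (u v : ℂ → ℝ)
    (hu : IsHarmonicOn u W) (hv : IsHarmonicOn v W)
    (hsq : ∀ z ∈ W, (u z) ^ 2 = (v z) ^ 2) :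
    (∀ z ∈ W, v z = u z) ∨ (∀ z ∈ W, v z = -u z) := by
  have hsub : ContinuousOn (u - v) W := (hu.1.sub hv.1).continuousOn
  have hadd : AnalyticOnNhd ℝ (u + v) W := fun z hz =>
    HarmonicAt.analyticAt <| (hu.harmonicOnNhd hWopen).add (hv.harmonicOnNhd hWopen) z hz
  have hprod : ∀ z ∈ W, (u - v) z • (u + v) z = 0 := fun z hz => by
    simp only [Pi.sub_apply, Pi.add_apply, smul_eq_mul]
    linear_combination hsq z hz
  rcases hadd.eq_zero_or_eq_zero_of_smul_eq_zero_of_isOpen hsub hWopen hWconn.isPreconnected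
    hprod with h | h
  · exact Or.inl fun z hz => (sub_eq_zero.mp (h z hz)).symm
  · exact Or.inr fun z hz => eq_neg_of_add_eq_zero_right (h z hz)
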